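/- For every θ ∈ ℝᵈ with ‖θ‖ < √d, the Euclidean norm of the population EM operator satisfies ‖M(θ)‖ = E_{Z∼N(0,1)}[ t_p( ‖θ‖·Z / (1 − ‖θ‖²/d) ) · Z ]; that is, ‖M(θ)‖ = m(‖θ‖). -/

import Mathlib

open MeasureTheory Real Set
open scoped ENNReal

noncomputable section

namespace OMDA

/-- `t_p(x)`. -/
def tp (p x : ℝ) : ℝ :=
  (p * Real.exp x - (1 - p) * Real.exp (-x)) / (p * Real.exp x + (1 - p) * Real.exp (-x))

/-- `c_p(x)`. -/
def cp (p x : ℝ) : ℝ := p * Real.exp x + (1 - p) * Real.exp (-x)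

/-- The standard normal density on `ℝ`. -/
def phi1 (z : ℝ) : ℝ := Real.exp (-z ^ 2 / 2) / Real.sqrt (2 * π)

/-- Expectation of `g Z` for `Z ∼ N(0,1)`. -/
def gexp (g : ℝ → ℝ) : ℝ := ∫ z : ℝ, g z * phi1 z

/-- The univariate population EM map `m(θ)`. -/
def m (p : ℝ) (d : ℕ) (θ : ℝ) : ℝ :=
  gexp fun z => tp p (θ * z / (1 - θ ^ 2 / d)) * z

/-- The radial negative population log-likelihood `ℓ(θ)`. -/
def ell (p : ℝ) (d : ℕ) (θ : ℝ) : ℝ :=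
  (d / 2 : ℝ) * Real.log (2 * π * (1 - θ ^ 2 / d)) + ((d : ℝ) + θ ^ 2) / (2 * (1 - θ ^ 2 / d))
    - gexp fun z => Real.log (cp p (θ * z / (1 - θ ^ 2 / d)))

/-- `q := 1 - (2p-1)²/2`. -/
def qp (p : ℝ) : ℝ := 1 - (2 * p - 1) ^ 2 / 2

/-- The initialization radius `√(d·(2+q−√(8q+q²))/2)`. -/
def θmax (p : ℝ) (d : ℕ) : ℝ :=
  Real.sqrt ((d : ℝ) * (2 + qp p - Real.sqrt (8 * qp p + qp p ^ 2)) / 2)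

/-- `ρ := (1+θ₀²/d)/(1−θ₀²/d)² · (1 − (2p−1)²/2)`. -/
def ρc (p : ℝ) (d : ℕ) (θ0 : ℝ) : ℝ :=
  (1 + θ0 ^ 2 / d) / (1 - θ0 ^ 2 / d) ^ 2 * (1 - (2 * p - 1) ^ 2 / 2)

/-- `ℝᵈ` with the Euclidean norm. -/
abbrev E (d : ℕ) := EuclideanSpace ℝ (Fin d)

/-- Density of `N(ν, σ²·I_d)` on `ℝᵈ`. -/
def gpdf (d : ℕ) (ν : E d) (σ2 : ℝ) (x : E d) : ℝ :=
  (2 * π * σ2) ^ (-(d : ℝ) / 2) * Real.exp (-‖x - ν‖ ^ 2 / (2 * σ2))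

/-- Density of the mixture `(1−p)·N(ν−θ, σ²I) + p·N(ν+θ, σ²I)`. -/
def mixPdf (p : ℝ) (d : ℕ) (ν θ : E d) (σ2 : ℝ) (x : E d) : ℝ :=
  (1 - p) * gpdf d (ν - θ) σ2 x + p * gpdf d (ν + θ) σ2 x

/-- The population EM operator `M(θ)`. -/
def Mop (p : ℝ) (d : ℕ) (θ : E d) : E d :=
  ∫ z : E d, (gpdf d 0 1 z * tp p ((inner ℝ θ z : ℝ) / (1 - ‖θ‖ ^ 2 / d))) • z

/-- KL divergence `D_KL[N(0,I_d) ∥ G(θ, σ²)]`, written via densities. -/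
def klStd (p : ℝ) (d : ℕ) (θ : E d) (σ2 : ℝ) : ℝ :=
  ∫ z : E d, gpdf d 0 1 z * Real.log (gpdf d 0 1 z / mixPdf p d 0 θ σ2 z)

/-- The standard normal cdf `Φ`. -/
def stdNormCdf (x : ℝ) : ℝ := ∫ z in Iic x, phi1 z

/-- Misclassification probability of a classifier `h` under the distribution `D`
with class-conditional laws `N(±μ, I_d)` and balanced classes. -/
def errProb (d : ℕ) (μ : E d) (h : E d → ℝ) : ℝ :=
  (1 / 2) * (∫ x in {x | h x ≠ 1}, gpdf d μ 1 x)
    + (1 / 2) * (∫ x in {x | h x ≠ -1}, gpdf d (-μ) 1 x)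

/-- The measure `N(ν, I_d)` on `ℝᵈ`, via its density. -/
def gaussMeasure (d : ℕ) (ν : E d) : Measure (E d) :=
  volume.withDensity fun x => ENNReal.ofReal (gpdf d ν 1 x)

/-- The standard Gaussian measure `N(0, I_d)`. -/
def stdGaussMeasure (d : ℕ) : Measure (E d) := gaussMeasure d 0

/-- The joint distribution `D` of `(X, Y)` on `ℝᵈ × ℝ`. -/
def Dmeas (d : ℕ) (μ : E d) : Measure (E d × ℝ) :=
  (1 / 2 : ℝ≥0∞) • ((gaussMeasure d μ).prod (Measure.dirac (1 : ℝ)))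
    + (1 / 2 : ℝ≥0∞) • ((gaussMeasure d (-μ)).prod (Measure.dirac (-1 : ℝ)))

/-- Chi-squared measure with `k` degrees of freedom. -/
def chiSqMeasure (k : ℕ) : Measure ℝ := ProbabilityTheory.gammaMeasure ((k : ℝ) / 2) (1 / 2)



/-! ### Auxiliary lemmas for Statement 9 -/

section AuxRadial

variable {p : ℝ}

lemma cp_pos' (hp0 : 0 < p) (hp1 : p < 1) (x : ℝ) :
    (0:ℝ) < p * Real.exp x + (1 - p) * Real.exp (-x) := by
  have h1 := Real.exp_pos x; have h2 := Real.exp_pos (-x)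
  nlinarith

lemma abs_tp_le_one (hp0 : 0 < p) (hp1 : p < 1) (x : ℝ) : |tp p x| ≤ 1 := by
  have hc := cp_pos' hp0 hp1 x
  rw [tp, abs_div, abs_of_pos hc, div_le_one hc]
  have h1 := Real.exp_pos x; have h2 := Real.exp_pos (-x)
  rw [abs_le]; constructor <;> nlinarith

lemma tp_mono (hp0 : 0 < p) (hp1 : p < 1) : Monotone (tp p) := by
  intro a b hab
  have hca := cp_pos' hp0 hp1 a
  have hcb := cp_pos' hp0 hp1 b
  rw [tp, tp, div_le_div_iff₀ hca hcb]
  have key : Real.exp a * Real.exp (-b) ≤ Real.exp b * Real.exp (-a) := by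
    rw [← Real.exp_add, ← Real.exp_add]
    exact Real.exp_le_exp.2 (by linarith)
  nlinarith [mul_nonneg (mul_nonneg hp0.le (sub_nonneg.2 hp1.le)) (sub_nonneg.2 key)]

lemma tp_continuous (hp0 : 0 < p) (hp1 : p < 1) : Continuous (tp p) := by
  unfold tp
  exact Continuous.div (by fun_prop) (by fun_prop) (fun x => (cp_pos' hp0 hp1 x).ne')

lemma phi1_pos (t : ℝ) : 0 < phi1 t :=
  div_pos (Real.exp_pos _) (Real.sqrt_pos.2 (by positivity))

lemma phi1_eq (t : ℝ) : phi1 t = Real.exp (-(1/2) * t ^ 2) * (Real.sqrt (2 * π))⁻¹ := by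
  rw [phi1, show -(1/2) * t ^ 2 = -t ^ 2 / 2 by ring, div_eq_mul_inv]

lemma integrable_phi1 : Integrable phi1 := by
  have h := (integrable_exp_neg_mul_sq (by norm_num : (0:ℝ) < 1/2)).mul_const (Real.sqrt (2*π))⁻¹
  exact h.congr (by filter_upwards with t using (phi1_eq t).symm)

lemma int_phi1 : ∫ t : ℝ, phi1 t = 1 := by
  have h : ∫ t : ℝ, phi1 t = (∫ t : ℝ, Real.exp (-(1/2) * t ^ 2)) * (Real.sqrt (2*π))⁻¹ := by
    rw [← integral_mul_const]; exact integral_congr_ae (by filter_upwards with t using phi1_eq t)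
  rw [h, integral_gaussian, show π / (1/2) = 2 * π by ring,
    mul_inv_cancel₀ (Real.sqrt_ne_zero'.2 (by positivity))]

lemma integrable_abs_mul_phi1 : Integrable (fun t : ℝ => |t| * phi1 t) := by
  have h := ((integrable_mul_exp_neg_mul_sq (by norm_num : (0:ℝ) < 1/2)).abs).mul_const
    (Real.sqrt (2*π))⁻¹
  refine h.congr (Filter.Eventually.of_forall fun t => ?_)
  simp only []
  rw [abs_mul, abs_of_pos (Real.exp_pos _), phi1_eq]; ring

lemma integrable_mul_phi1 : Integrable (fun t : ℝ => t * phi1 t) := by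
  have h := (integrable_mul_exp_neg_mul_sq (by norm_num : (0:ℝ) < 1/2)).mul_const
    (Real.sqrt (2*π))⁻¹
  refine h.congr (Filter.Eventually.of_forall fun t => ?_)
  simp only []
  rw [phi1_eq]; ring

lemma int_mul_phi1 : ∫ t : ℝ, phi1 t * t = 0 := by
  have h := MeasureTheory.integral_neg_eq_self (fun t : ℝ => phi1 t * t) volume
  simp only [phi1, neg_sq, mul_neg] at h
  rw [integral_neg] at h
  simp only [phi1] at h ⊢
  linarith

lemma integrable_g_mul (g : ℝ → ℝ) (hg : Continuous g) (hb : ∀ t, |g t| ≤ 1) :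
    Integrable (fun t : ℝ => g t * t * phi1 t) := by
  have hphi : Continuous phi1 := by unfold phi1; fun_prop
  refine integrable_abs_mul_phi1.mono'
    (((hg.mul continuous_id).mul hphi).aestronglyMeasurable)
    (Filter.Eventually.of_forall fun t => ?_)
  rw [Real.norm_eq_abs, abs_mul, abs_mul, abs_of_pos (phi1_pos t)]
  have h1 := hb t
  nlinarith [abs_nonneg t, (phi1_pos t).le, abs_nonneg (g t),
    mul_le_mul_of_nonneg_right h1 (abs_nonneg t),
    mul_le_mul_of_nonneg_right
      (mul_le_mul_of_nonneg_right h1 (abs_nonneg t)) (phi1_pos t).le]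

lemma gexp_nonneg_aux (hp0 : 0 < p) (hp1 : p < 1) (r s : ℝ) (hr : 0 ≤ r) (hs : 0 < s) :
    0 ≤ gexp (fun t => tp p (r * t / s) * t) := by
  have hgc : Continuous fun t : ℝ => tp p (r * t / s) :=
    (tp_continuous hp0 hp1).comp (by fun_prop)
  have h1 : Integrable (fun z : ℝ => tp p (r * z / s) * z * phi1 z) :=
    integrable_g_mul _ hgc (fun t => abs_tp_le_one hp0 hp1 _)
  have h2 : Integrable (fun z : ℝ => tp p 0 * (z * phi1 z)) :=
    integrable_mul_phi1.const_mul _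
  have hsplit : (fun z : ℝ => tp p (r * z / s) * z * phi1 z)
      = fun z => (tp p (r * z / s) - tp p 0) * z * phi1 z + tp p 0 * (z * phi1 z) :=
    funext fun z => by ring
  have hI : gexp (fun z => tp p (r * z / s) * z)
      = (∫ z : ℝ, (tp p (r * z / s) - tp p 0) * z * phi1 z)
        + tp p 0 * ∫ z : ℝ, z * phi1 z := by
    rw [gexp]
    calc ∫ z : ℝ, tp p (r * z / s) * z * phi1 z
        = ∫ z : ℝ, ((tp p (r * z / s) - tp p 0) * z * phi1 z + tp p 0 * (z * phi1 z)) := by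
          rw [← hsplit]
      _ = _ := by
          have h3 : Integrable (fun z : ℝ => (tp p (r * z / s) - tp p 0) * z * phi1 z) := by
            refine (h1.sub h2).congr (Filter.Eventually.of_forall fun z => ?_)
            simp only [Pi.sub_apply]; ring
          rw [integral_add h3 h2, integral_const_mul]
  have hzero : ∫ z : ℝ, z * phi1 z = 0 := by
    rw [show (fun z : ℝ => z * phi1 z) = fun z : ℝ => phi1 z * z from
      funext fun z => mul_comm _ _]
    exact int_mul_phi1
  rw [hI, hzero, mul_zero, add_zero]
  refine integral_nonneg fun z => ?_
  rcases le_or_gt 0 z with hz | hz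
  · have harg : (0:ℝ) ≤ r * z / s := div_nonneg (mul_nonneg hr hz) hs.le
    exact mul_nonneg (mul_nonneg (sub_nonneg.2 (tp_mono hp0 hp1 harg)) hz) (phi1_pos z).le
  · have hrz : r * z ≤ 0 := mul_nonpos_of_nonneg_of_nonpos hr hz.le
    have harg : r * z / s ≤ 0 := div_nonpos_of_nonpos_of_nonneg hrz hs.le
    have htp := sub_nonpos.2 (tp_mono hp0 hp1 harg)
    have hzz : (0:ℝ) ≤ (tp p (r * z / s) - tp p 0) * z := by
      nlinarith [mul_nonneg (neg_nonneg.2 htp) (neg_nonneg.2 hz.le)]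
    exact mul_nonneg hzz (phi1_pos z).le

lemma gpdf_prod (d : ℕ) (z : E d) : gpdf d 0 1 z = ∏ i, phi1 (z i) := by
  have h2π : (0:ℝ) < 2 * π := by positivity
  have hnorm : ‖z‖ ^ 2 = ∑ i, (z i) ^ 2 := by
    rw [EuclideanSpace.norm_eq, Real.sq_sqrt (Finset.sum_nonneg fun i _ => sq_nonneg _)]
    simp [Real.norm_eq_abs, sq_abs]
  have hc : (2 * π * 1 : ℝ) ^ (-(d : ℝ) / 2) = ((Real.sqrt (2 * π)) ^ d)⁻¹ := by
    rw [mul_one, show (-(d:ℝ)/2) = ((1:ℝ)/2) * (-(d:ℝ)) by ring, Real.rpow_mul h2π.le,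
      ← Real.sqrt_eq_rpow, Real.rpow_neg (Real.sqrt_nonneg _), Real.rpow_natCast]
  rw [gpdf, hc, sub_zero, hnorm]
  rw [show ((-∑ i, (z i)^2) / (2*1) : ℝ) = ∑ i, (-(z i)^2/2) by
      rw [mul_one, ← Finset.sum_neg_distrib, Finset.sum_div],
    Real.exp_sum]
  simp only [phi1, div_eq_mul_inv]
  rw [Finset.prod_mul_distrib, Finset.prod_const, Finset.card_univ, Fintype.card_fin,
    mul_comm, inv_pow]

lemma integral_coord (d : ℕ) (g : ℝ → ℝ) (i₀ j : Fin d) :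
    ∫ z : E d, gpdf d 0 1 z * g (z i₀) * z j
      = if j = i₀ then gexp (fun t => g t * t) else 0 := by
  have htrans := (MeasurePreserving.symm _
      (EuclideanSpace.volume_preserving_symm_measurableEquiv_toLp (Fin d))).integral_comp'
    (fun z : E d => gpdf d 0 1 z * g (z i₀) * z j)
  rw [← htrans]
  have hfun : ∀ x : Fin d → ℝ,
      gpdf d 0 1 (((MeasurableEquiv.toLp 2 (Fin d → ℝ)).symm).symm x)
        * g ((((MeasurableEquiv.toLp 2 (Fin d → ℝ)).symm).symm x) i₀)
        * (((MeasurableEquiv.toLp 2 (Fin d → ℝ)).symm).symm x) j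
      = ∏ i, (fun t => phi1 t * ((if i = i₀ then g t else 1) * (if i = j then t else 1)))
          (x i) := by
    intro x
    have happ : ∀ i, (((MeasurableEquiv.toLp 2 (Fin d → ℝ)).symm).symm x) i = x i := fun _ => rfl
    simp only [happ, gpdf_prod]
    rw [Finset.prod_mul_distrib, Finset.prod_mul_distrib,
      Finset.prod_ite_eq' Finset.univ i₀ (fun i => g (x i)),
      Finset.prod_ite_eq' Finset.univ j (fun i => x i)]
    simp only [Finset.mem_univ, if_true]
    ring
  rw [integral_congr_ae (Filter.Eventually.of_forall hfun),
    MeasureTheory.integral_fintype_prod_volume_eq_prod (𝕜 := ℝ) (ι := Fin d)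
      (fun i t => phi1 t * ((if i = i₀ then g t else 1) * (if i = j then t else 1)))]
  by_cases hij : j = i₀
  · subst hij
    have hval : ∀ i : Fin d,
        (∫ t : ℝ, phi1 t * ((if i = j then g t else 1) * (if i = j then t else 1)))
          = if i = j then gexp (fun t => g t * t) else 1 := by
      intro i
      by_cases h : i = j
      · simp only [h, if_true, gexp]
        congr 1; funext t; ring
      · simp only [h, if_false, mul_one, int_phi1]
    simp only [hval]
    rw [Finset.prod_ite_eq' Finset.univ j (fun _ => gexp (fun t => g t * t))]
    simp
  · rw [if_neg hij]
    refine Finset.prod_eq_zero (Finset.mem_univ j) ?_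
    simp only [if_neg hij, if_pos rfl, one_mul]
    exact int_mul_phi1

lemma norm_le_sum_abs (d : ℕ) (x : Fin d → ℝ) :
    ‖((MeasurableEquiv.toLp 2 (Fin d → ℝ)).symm).symm x‖ ≤ ∑ i, |x i| := by
  rw [EuclideanSpace.norm_eq]
  have happ : ∀ i, (((MeasurableEquiv.toLp 2 (Fin d → ℝ)).symm).symm x) i = x i := fun _ => rfl
  simp only [happ, Real.norm_eq_abs]
  have h1 : ∑ i, |x i| ^ 2 ≤ (∑ i, |x i|) ^ 2 :=
    Finset.sum_sq_le_sq_sum_of_nonneg (fun i _ => abs_nonneg _)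
  calc Real.sqrt (∑ i, |x i| ^ 2) ≤ Real.sqrt ((∑ i, |x i|) ^ 2) := Real.sqrt_le_sqrt h1
    _ = ∑ i, |x i| := Real.sqrt_sq (Finset.sum_nonneg fun i _ => abs_nonneg _)

lemma integrable_gpdf_norm (d : ℕ) :
    Integrable (fun z : E d => gpdf d 0 1 z * ‖z‖) := by
  rw [← (MeasurePreserving.symm _
      (EuclideanSpace.volume_preserving_symm_measurableEquiv_toLp (Fin d))).integrable_comp_emb
      (MeasurableEquiv.measurableEmbedding _)]
  have hS : Integrable (fun x : Fin d → ℝ =>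
      ∑ j, ∏ i, (fun t => phi1 t * (if i = j then |t| else 1)) (x i)) := by
    refine integrable_finset_sum _ (fun j _ => ?_)
    refine Integrable.fintype_prod (𝕜 := ℝ)
      (f := fun i t => phi1 t * (if i = j then |t| else 1)) (fun i => ?_)
    by_cases h : i = j
    · simp only [h, if_pos rfl]
      exact integrable_abs_mul_phi1.congr
        (Filter.Eventually.of_forall fun t => by simp [mul_comm])
    · simp only [if_neg h, mul_one]
      exact integrable_phi1
  refine hS.mono' ?_ ?_
  · have hg : Continuous (fun z : E d => gpdf d 0 1 z * ‖z‖) := by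
      unfold gpdf; fun_prop
    have hsymm : Continuous (((MeasurableEquiv.toLp 2 (Fin d → ℝ)).symm).symm) := by
      exact PiLp.continuous_toLp _ _
    exact (hg.comp hsymm).aestronglyMeasurable
  · refine Filter.Eventually.of_forall (fun x => ?_)
    have happ : ∀ i, (((MeasurableEquiv.toLp 2 (Fin d → ℝ)).symm).symm x) i = x i := fun _ => rfl
    have hprod : ∀ j : Fin d,
        (∏ i, (fun t => phi1 t * (if i = j then |t| else 1)) (x i))
          = (∏ i, phi1 (x i)) * |x j| := by
      intro j
      simp only []
      rw [Finset.prod_mul_distrib, Finset.prod_ite_eq' Finset.univ j (fun i => |x i|)]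
      simp
    have hpos : (0:ℝ) ≤ ∏ i, phi1 (x i) :=
      Finset.prod_nonneg (fun i _ => (phi1_pos _).le)
    have hnn : (0:ℝ) ≤ gpdf d 0 1 (((MeasurableEquiv.toLp 2 (Fin d → ℝ)).symm).symm x) := by
      rw [gpdf_prod]; simpa only [happ] using hpos
    rw [Function.comp_apply, Real.norm_eq_abs,
      abs_of_nonneg (mul_nonneg hnn (norm_nonneg _)), gpdf_prod]
    simp only [happ, hprod]
    rw [← Finset.mul_sum]
    exact mul_le_mul_of_nonneg_left (norm_le_sum_abs d x) hpos

lemma integrable_vec (d : ℕ) (g : ℝ → ℝ) (hg : Continuous g) (hb : ∀ t, |g t| ≤ 1)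
    (i₀ : Fin d) :
    Integrable (fun z : E d => (gpdf d 0 1 z * g (z i₀)) • z) := by
  refine (integrable_gpdf_norm d).mono' ?_ ?_
  · have hc : Continuous (fun z : E d => (gpdf d 0 1 z * g (z i₀)) • z) := by
      refine Continuous.smul (f := fun z : E d => gpdf d 0 1 z * g (z i₀)) ?_ continuous_id
      refine Continuous.mul ?_ (hg.comp ?_)
      · unfold gpdf; fun_prop
      · exact (EuclideanSpace.proj i₀ : E d →L[ℝ] ℝ).continuous
    exact hc.aestronglyMeasurable
  · refine Filter.Eventually.of_forall (fun z => ?_)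
    have hnn : (0:ℝ) ≤ gpdf d 0 1 z := by
      rw [gpdf_prod]; exact Finset.prod_nonneg (fun i _ => (phi1_pos _).le)
    rw [norm_smul, Real.norm_eq_abs, abs_mul, abs_of_nonneg hnn]
    nlinarith [norm_nonneg z, mul_le_mul_of_nonneg_left (hb (z i₀)) hnn,
      mul_le_mul_of_nonneg_right (mul_le_mul_of_nonneg_left (hb (z i₀)) hnn) (norm_nonneg z),
      abs_nonneg (g (z i₀))]

lemma integral_vec (d : ℕ) (g : ℝ → ℝ) (hg : Continuous g) (hb : ∀ t, |g t| ≤ 1)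
    (i₀ : Fin d) :
    ∫ z : E d, (gpdf d 0 1 z * g (z i₀)) • z
      = gexp (fun t => g t * t) • (EuclideanSpace.single i₀ (1:ℝ) : E d) := by
  have hint := integrable_vec d g hg hb i₀
  ext j
  have hproj := (EuclideanSpace.proj j : E d →L[ℝ] ℝ).integral_comp_comm hint
  have hlhs : (∫ z : E d, (gpdf d 0 1 z * g (z i₀)) • z) j
      = ∫ z : E d, gpdf d 0 1 z * g (z i₀) * z j := by
    have h0 : (∫ z : E d, (gpdf d 0 1 z * g (z i₀)) • z) j
        = (EuclideanSpace.proj j) (∫ z : E d, (gpdf d 0 1 z * g (z i₀)) • z) := rfl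
    rw [h0, ← hproj]
    rfl
  rw [hlhs, integral_coord d g i₀ j]
  have hrhs : (gexp (fun t => g t * t) • (EuclideanSpace.single i₀ (1:ℝ) : E d)) j
      = gexp (fun t => g t * t) * (if j = i₀ then 1 else 0) := by
    rw [PiLp.smul_apply, EuclideanSpace.single_apply, smul_eq_mul]
  rw [hrhs]
  by_cases h : j = i₀ <;> simp [h]

end AuxRadial

/-- the norm of the population EM operator is radial:
`‖M(θ)‖ = m(‖θ‖)`. -/
theorem Mop_norm_radial
    (p : ℝ) (hp : p ∈ Set.Ioo (1 / 2 : ℝ) 1) (d : ℕ) (hd : 1 ≤ d)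
    (θ : E d) (hθ : ‖θ‖ < Real.sqrt d) :
    ‖Mop p d θ‖ = m p d ‖θ‖ := by
  obtain ⟨hp2, hp1⟩ := hp
  have hp0 : (0:ℝ) < p := by linarith
  have hd0 : (0:ℝ) < d := by exact_mod_cast Nat.lt_of_lt_of_le Nat.zero_lt_one hd
  have hr0 : (0:ℝ) ≤ ‖θ‖ := norm_nonneg θ
  have hr2 : ‖θ‖ ^ 2 < d := by
    have h := Real.sq_sqrt hd0.le
    nlinarith [Real.sqrt_nonneg (d:ℝ)]
  have hs : (0:ℝ) < 1 - ‖θ‖ ^ 2 / (d:ℝ) := by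
    rw [sub_pos, div_lt_one hd0]; exact hr2
  have hi₀ : 0 < d := hd
  let i₀ : Fin d := ⟨0, hi₀⟩
  let g : ℝ → ℝ := fun t => tp p (‖θ‖ * t / (1 - ‖θ‖ ^ 2 / (d:ℝ)))
  have hgc : Continuous g := (tp_continuous hp0 hp1).comp (by fun_prop)
  have hgb : ∀ t, |g t| ≤ 1 := fun t => abs_tp_le_one hp0 hp1 _
  have key : ‖Mop p d θ‖ = ‖∫ z : E d, (gpdf d 0 1 z * g (z i₀)) • z‖ := by
    by_cases h0 : θ = 0
    · subst h0
      rw [Mop]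
      congr 1
      refine integral_congr_ae (Filter.Eventually.of_forall fun z => ?_)
      simp only []
      congr 2
      rw [inner_zero_left]
      show _ = tp p (‖(0:E d)‖ * z i₀ / (1 - ‖(0:E d)‖ ^ 2 / (d:ℝ)))
      simp
    · have hrne : ‖θ‖ ≠ 0 := norm_ne_zero_iff.2 h0
      set u : E d := ‖θ‖⁻¹ • θ with hu_def
      have hu : ‖u‖ = 1 := by
        rw [hu_def, norm_smul, norm_inv, norm_norm, inv_mul_cancel₀ hrne]
      have hθu : θ = ‖θ‖ • u := (smul_inv_smul₀ hrne θ).symm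
      have hcard : Module.finrank ℝ (E d) = Fintype.card (Fin d) := by
        simp [finrank_euclideanSpace_fin]
      have horth : Orthonormal ℝ (Set.restrict {i₀} (fun _ : Fin d => u)) := by
        constructor
        · intro i; exact hu
        · intro i j hij
          exact absurd (Subtype.ext (i.2.trans j.2.symm)) hij
      obtain ⟨b, hb⟩ := horth.exists_orthonormalBasis_extension_of_card_eq hcard
      have hbu : b i₀ = u := hb i₀ rfl
      set O := b.repr.symm with hO_def
      have hreprθ : b.repr θ = EuclideanSpace.single i₀ ‖θ‖ := by
        conv_lhs => rw [hθu]
        rw [_root_.map_smul, ← hbu, b.repr_self]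
        ext k
        simp only [PiLp.smul_apply, EuclideanSpace.single_apply, smul_eq_mul]
        by_cases hk : k = i₀ <;> simp [hk]
      have hinner : ∀ w : E d, (inner ℝ θ (O w) : ℝ) = ‖θ‖ * w i₀ := by
        intro w
        have h1 : (inner ℝ θ (O w) : ℝ) = (inner ℝ (b.repr θ) (b.repr (O w)) : ℝ) :=
          (b.repr.inner_map_map θ (O w)).symm
        rw [h1, hO_def, LinearIsometryEquiv.apply_symm_apply, hreprθ,
          EuclideanSpace.inner_single_left]
        simp
      have hgO : ∀ w : E d, gpdf d 0 1 (O w) = gpdf d 0 1 w := by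
        intro w
        rw [gpdf, gpdf, sub_zero, sub_zero, O.norm_map]
      have hMop : Mop p d θ = O (∫ w : E d, (gpdf d 0 1 w * g (w i₀)) • w) := by
        have hOI : O (∫ w : E d, (gpdf d 0 1 w * g (w i₀)) • w)
            = ∫ w : E d, O ((gpdf d 0 1 w * g (w i₀)) • w) :=
          (O.toLinearIsometry.integral_comp_comm _).symm
        rw [Mop,
          ← MeasureTheory.integral_comp O
            (fun z : E d =>
              (gpdf d 0 1 z * tp p ((inner ℝ θ z : ℝ) / (1 - ‖θ‖ ^ 2 / d))) • z),
          hOI]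
        refine integral_congr_ae (Filter.Eventually.of_forall fun w => ?_)
        simp only []
        rw [hgO w, hinner w, _root_.map_smul]
      rw [hMop, O.norm_map]
  rw [key, integral_vec d g hgc hgb i₀, norm_smul, EuclideanSpace.norm_single, norm_one,
    mul_one, Real.norm_eq_abs]
  have hm : m p d ‖θ‖ = gexp fun t => g t * t := rfl
  rw [hm, abs_of_nonneg (gexp_nonneg_aux hp0 hp1 _ _ hr0 hs)]


end OMDA
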